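/- Let Γ be a Motzkin path and let x ∈ ℕ be contained in a hill interval I_x of Γ. Then the set of hill intervals of 𝓔_x(Γ) equals the set of hill intervals of Γ with I_x removed: 𝓘(𝓔_x(Γ)) = 𝓘(Γ) \ {I_x}. -/
import Mathlib


/-- A Motzkin path: starts at 0, steps in {−1,0,+1}, nonnegative (ℕ-valued), eventually 0. -/
def IsMotzkin (Γ : ℕ → ℕ) : Prop :=
  Γ 0 = 0 ∧
  (∀ k, (Γ (k + 1) : ℤ) - (Γ k : ℤ) = 1 ∨ (Γ (k + 1) : ℤ) - (Γ k : ℤ) = 0 ∨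
    (Γ (k + 1) : ℤ) - (Γ k : ℤ) = -1) ∧
  ∃ N, ∀ k, N ≤ k → Γ k = 0

/-- `[a,b]` is a hill interval of `Γ`: `Γ (a-1) = Γ c - 1 = Γ (b+1)` for all `c ∈ [a,b]`. -/
def IsHillInterval (Γ : ℕ → ℕ) (a b : ℕ) : Prop :=
  1 ≤ a ∧ a ≤ b ∧ ∀ c, a ≤ c → c ≤ b → Γ c = Γ (a - 1) + 1 ∧ Γ (b + 1) = Γ (a - 1)

open Classical in
/-- The hill-flattening operator: decrease `Γ` by 1 on every point of a hill interval. -/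
noncomputable def hillFlatten (Γ : ℕ → ℕ) : ℕ → ℕ := fun k =>
  if ∃ a b, IsHillInterval Γ a b ∧ a ≤ k ∧ k ≤ b then Γ k - 1 else Γ k

/-- The number of hill intervals of `Γ`. -/
noncomputable def numHills (Γ : ℕ → ℕ) : ℕ :=
  {q : ℕ × ℕ | IsHillInterval Γ q.1 q.2}.ncard

/-- The excursion operator pivoted at `x`:
`𝓔_x(Γ)(k) = Γ k − min_{min(x,k) ≤ y ≤ max(x,k)} Γ y`. -/
def pivotExcPath (x : ℕ) (Γ : ℕ → ℕ) : ℕ → ℕ := fun k =>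
  Γ k - (Finset.Icc (min x k) (max x k)).inf' (Finset.nonempty_Icc.mpr min_le_max) Γ

namespace Stmt11Aux

lemma inf'_le_of_mem (Γ : ℕ → ℕ) {l u c : ℕ} (hne : (Finset.Icc l u).Nonempty)
    (h1 : l ≤ c) (h2 : c ≤ u) : (Finset.Icc l u).inf' hne Γ ≤ Γ c :=
  Finset.inf'_le _ (Finset.mem_Icc.mpr ⟨h1, h2⟩)

lemma le_inf'_of (Γ : ℕ → ℕ) {l u v : ℕ} (hne : (Finset.Icc l u).Nonempty)
    (h : ∀ c, l ≤ c → c ≤ u → v ≤ Γ c) :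
    v ≤ (Finset.Icc l u).inf' hne Γ :=
  Finset.le_inf' _ _ fun c hc => h c (Finset.mem_Icc.mp hc).1 (Finset.mem_Icc.mp hc).2

/-- The running minimum appearing in `pivotExcPath`. -/
noncomputable def muF (Γ : ℕ → ℕ) (x k : ℕ) : ℕ :=
  (Finset.Icc (min x k) (max x k)).inf' (Finset.nonempty_Icc.mpr min_le_max) Γ

lemma pivot_eq (Γ : ℕ → ℕ) (x k : ℕ) : pivotExcPath x Γ k = Γ k - muF Γ x k := rfl

lemma muF_le (Γ : ℕ → ℕ) (x k : ℕ) : muF Γ x k ≤ Γ k :=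
  inf'_le_of_mem Γ _ (min_le_right _ _) (le_max_right _ _)

lemma muF_rec_left (Γ : ℕ → ℕ) {x k : ℕ} (hk : k < x) :
    muF Γ x k = min (Γ k) (muF Γ x (k + 1)) := by
  apply le_antisymm
  · refine le_min (inf'_le_of_mem Γ _ (by omega) (by omega))
      (le_inf'_of Γ _ fun c h1 h2 => inf'_le_of_mem Γ _ (by omega) (by omega))
  · refine le_inf'_of Γ _ fun c h1 h2 => ?_
    rcases (by omega : c = k ∨ k + 1 ≤ c) with rfl | h
    · exact min_le_left _ _
    · exact le_trans (min_le_right _ _) (inf'_le_of_mem Γ _ (by omega) (by omega))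

lemma muF_rec_right (Γ : ℕ → ℕ) {x k : ℕ} (hk : x ≤ k) :
    muF Γ x (k + 1) = min (muF Γ x k) (Γ (k + 1)) := by
  apply le_antisymm
  · refine le_min (le_inf'_of Γ _ fun c h1 h2 => inf'_le_of_mem Γ _ (by omega) (by omega))
      (inf'_le_of_mem Γ _ (by omega) (by omega))
  · refine le_inf'_of Γ _ fun c h1 h2 => ?_
    rcases (by omega : c = k + 1 ∨ c ≤ k) with rfl | h
    · exact min_le_right _ _
    · exact le_trans (min_le_left _ _) (inf'_le_of_mem Γ _ (by omega) (by omega))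

lemma key (Γ : ℕ → ℕ) (hs1 : ∀ k, Γ (k + 1) ≤ Γ k + 1) (hs2 : ∀ k, Γ k ≤ Γ (k + 1) + 1)
    (a b x : ℕ) (hab : IsHillInterval Γ a b) (hx1 : a ≤ x) (hx2 : x ≤ b) (a' b' : ℕ) :
    IsHillInterval (pivotExcPath x Γ) a' b' ↔
      IsHillInterval Γ a' b' ∧ ¬(a' = a ∧ b' = b) := by
  obtain ⟨ha1, habb, hh⟩ := hab
  have hΓc : ∀ c, a ≤ c → c ≤ b → Γ c = Γ (a - 1) + 1 := fun c h1 h2 => (hh c h1 h2).1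
  have hΓb1 : Γ (b + 1) = Γ (a - 1) := (hh a le_rfl habb).2
  have hμle := muF_le Γ x
  have hE : ∀ k, pivotExcPath x Γ k = Γ k - muF Γ x k := pivot_eq Γ x
  -- the excursion vanishes on [a-1, b+1]
  have hE0 : ∀ k, a - 1 ≤ k → k ≤ b + 1 → pivotExcPath x Γ k = 0 := by
    intro k h1 h2
    have hle : Γ k ≤ muF Γ x k := by
      refine le_inf'_of Γ _ fun c hc1 hc2 => ?_
      by_cases hk : a ≤ k ∧ k ≤ b
      · have hc : a ≤ c ∧ c ≤ b := by omega
        rw [hΓc k hk.1 hk.2, hΓc c hc.1 hc.2]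
      · have hΓk : Γ k = Γ (a - 1) := by
          rcases (by omega : k = a - 1 ∨ k = b + 1) with rfl | rfl
          · rfl
          · exact hΓb1
        rw [hΓk]
        rcases (by omega : c = a - 1 ∨ c = b + 1 ∨ (a ≤ c ∧ c ≤ b)) with rfl | rfl | hc
        · exact le_rfl
        · rw [hΓb1]
        · rw [hΓc c hc.1 hc.2]; omega
    rw [hE]; omega
  constructor
  · -- forward direction
    rintro ⟨ha'1, ha'b', hh'⟩
    have hEc : ∀ c, a' ≤ c → c ≤ b' →
        pivotExcPath x Γ c = pivotExcPath x Γ (a' - 1) + 1 := fun c h1 h2 => (hh' c h1 h2).1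
    have hEb1 : pivotExcPath x Γ (b' + 1) = pivotExcPath x Γ (a' - 1) := (hh' a' le_rfl ha'b').2
    set v := pivotExcPath x Γ (a' - 1) with hv
    -- separation
    have hsep : b' + 1 ≤ a - 1 ∨ b + 1 ≤ a' - 1 := by
      by_contra hcon
      push_neg at hcon
      have hc1 : a - 1 ≤ b' := by omega
      have hc2 : a' ≤ b + 1 := by omega
      have hmem1 : a' ≤ max a' (a - 1) := le_max_left _ _
      have hmem2 : max a' (a - 1) ≤ b' := by omega
      have e1 := hEc (max a' (a - 1)) hmem1 hmem2
      have e2 := hE0 (max a' (a - 1)) (by omega) (by omega)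
      omega
    rcases hsep with hsepL | hsepR
    · -- left case: b' + 1 ≤ a - 1
      have hgt : ∀ k, a' ≤ k → k ≤ b' → muF Γ x k < Γ k := by
        intro k h1 h2
        have h9 := hEc k h1 h2
        rw [hE] at h9
        have := hμle k
        omega
      -- μ constant on [a', b'+1]
      have hconst : ∀ d k, k + d = b' + 1 → a' ≤ k → muF Γ x k = muF Γ x (b' + 1) := by
        intro d
        induction d with
        | zero => intro k hk _; rw [show k = b' + 1 by omega]
        | succ n ih =>
          intro k hk hk2
          have h5 : muF Γ x k = min (Γ k) (muF Γ x (k + 1)) := muF_rec_left Γ (by omega)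
          have h6 : muF Γ x k < Γ k := hgt k hk2 (by omega)
          have h7 := ih (k + 1) (by omega) (by omega)
          rcases le_total (Γ k) (muF Γ x (k + 1)) with h | h
          · rw [min_eq_left h] at h5; omega
          · rw [min_eq_right h] at h5; omega
      set μ0 := muF Γ x (b' + 1) with hμ0
      have hμa' : muF Γ x a' = μ0 := hconst (b' + 1 - a') a' (by omega) le_rfl
      have hΓa' : Γ a' = μ0 + (v + 1) := by
        have h9 := hEc a' le_rfl ha'b'
        rw [hE] at h9
        have := hμle a'
        omega
      have hrec0 : muF Γ x (a' - 1) = min (Γ (a' - 1)) (muF Γ x a') := by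
        have := muF_rec_left Γ (x := x) (k := a' - 1) (by omega)
        rwa [show a' - 1 + 1 = a' by omega] at this
      have hstep := hs1 (a' - 1)
      rw [show a' - 1 + 1 = a' by omega] at hstep
      -- deduce μ (a'-1) = μ0 and Γ (a'-1) = μ0 + v
      have hμa1 : muF Γ x (a' - 1) = μ0 := by
        rw [hμa'] at hrec0; omega
      have hΓa1 : Γ (a' - 1) = μ0 + v := by
        have := hμle (a' - 1)
        rw [hE] at hv
        omega
      have hΓb'1 : Γ (b' + 1) = μ0 + v := by
        have := hμle (b' + 1)
        rw [hE] at hEb1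
        omega
      refine ⟨⟨ha'1, ha'b', fun c h1 h2 => ?_⟩, ?_⟩
      · constructor
        · have hμc : muF Γ x c = μ0 := hconst (b' + 1 - c) c (by omega) h1
          have h9 := hEc c h1 h2
          rw [hE] at h9
          have := hμle c
          omega
        · omega
      · rintro ⟨e1', e2'⟩; omega
    · -- right case: b + 1 ≤ a' - 1
      have hgt : ∀ k, a' ≤ k → k ≤ b' → muF Γ x k < Γ k := by
        intro k h1 h2
        have h9 := hEc k h1 h2
        rw [hE] at h9
        have := hμle k
        omega
      have hxb : x ≤ a' - 1 := by omega
      -- μ constant on [a'-1, b']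
      have hconst : ∀ d k, k = a' - 1 + d → k ≤ b' → muF Γ x k = muF Γ x (a' - 1) := by
        intro d
        induction d with
        | zero => intro k hk _; rw [show k = a' - 1 by omega]
        | succ n ih =>
          intro k hk hk2
          have hk3 : k = (a' - 1 + n) + 1 := by omega
          have h5 : muF Γ x ((a' - 1 + n) + 1) = min (muF Γ x (a' - 1 + n)) (Γ ((a' - 1 + n) + 1)) :=
            muF_rec_right Γ (by omega)
          rw [← hk3] at h5
          have h6 : muF Γ x k < Γ k := hgt k (by omega) hk2
          have h7 := ih (a' - 1 + n) rfl (by omega)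
          rcases le_total (muF Γ x (a' - 1 + n)) (Γ k) with h | h
          · rw [min_eq_left h] at h5; omega
          · rw [min_eq_right h] at h5; omega
      set μ0 := muF Γ x (a' - 1) with hμ0
      have hΓa1 : Γ (a' - 1) = μ0 + v := by
        have := hμle (a' - 1)
        rw [hE] at hv
        omega
      have hΓc' : ∀ c, a' ≤ c → c ≤ b' → Γ c = μ0 + (v + 1) := by
        intro c h1 h2
        have hμc : muF Γ x c = μ0 := hconst (c - (a' - 1)) c (by omega) h2
        have h9 := hEc c h1 h2
        rw [hE] at h9
        have := hμle c
        omega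
      have hμb' : muF Γ x b' = μ0 := hconst (b' - (a' - 1)) b' (by omega) le_rfl
      have hrec0 : muF Γ x (b' + 1) = min (muF Γ x b') (Γ (b' + 1)) :=
        muF_rec_right Γ (by omega)
      rw [hμb'] at hrec0
      have hstep := hs2 b'
      have hΓb'' : Γ b' = μ0 + (v + 1) := hΓc' b' ha'b' le_rfl
      have hΓb'1 : Γ (b' + 1) = μ0 + v := by
        have h8 := hμle (b' + 1)
        rw [hE] at hEb1
        rcases le_total μ0 (Γ (b' + 1)) with h | h
        · rw [min_eq_left h] at hrec0; omega
        · rw [min_eq_right h] at hrec0; omega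
      refine ⟨⟨ha'1, ha'b', fun c h1 h2 => ⟨?_, by omega⟩⟩, ?_⟩
      · rw [hΓc' c h1 h2]; omega
      · rintro ⟨e1', e2'⟩; omega
  · -- backward direction
    rintro ⟨⟨ha'1, ha'b', hh'⟩, hne⟩
    have hΓc' : ∀ c, a' ≤ c → c ≤ b' → Γ c = Γ (a' - 1) + 1 := fun c h1 h2 => (hh' c h1 h2).1
    have hΓb1' : Γ (b' + 1) = Γ (a' - 1) := (hh' a' le_rfl ha'b').2
    -- separation
    have hsep : b' + 1 ≤ a - 1 ∨ b + 1 ≤ a' - 1 := by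
      by_contra hcon
      push_neg at hcon
      have hc1 : a - 1 ≤ b' := by omega
      have hc2 : a' ≤ b + 1 := by omega
      rcases (by omega : a' = b + 1 ∨ b' + 1 = a ∨ (a' ≤ b ∧ a ≤ b')) with h | h | h
      · have e1 : Γ b = Γ (a - 1) + 1 := hΓc b habb le_rfl
        have e2 : Γ a' = Γ (a' - 1) + 1 := hΓc' a' le_rfl ha'b'
        rw [h, show b + 1 - 1 = b by omega] at e2
        omega
      · have e1 : Γ b' = Γ (a' - 1) + 1 := hΓc' b' ha'b' le_rfl
        have e2 : Γ (b' + 1) = Γ (a' - 1) := hΓb1'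
        rw [h] at e2
        have e4 : Γ a = Γ (a - 1) + 1 := hΓc a le_rfl habb
        have e5 : Γ b' = Γ (a - 1) := by rw [show b' = a - 1 by omega]
        omega
      · have hmid : Γ (max a a') = Γ (a - 1) + 1 := hΓc _ (le_max_left _ _) (by omega)
        have hmid' : Γ (max a a') = Γ (a' - 1) + 1 := hΓc' _ (le_max_right _ _) (by omega)
        rcases (by omega : a' < a ∨ a < a' ∨ (a' = a ∧ b' < b) ∨ (a' = a ∧ b < b') ∨
            (a' = a ∧ b' = b)) with h' | h' | ⟨he, h'⟩ | ⟨he, h'⟩ | h'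
        · have e1 : Γ (a - 1) = Γ (a' - 1) + 1 := hΓc' (a - 1) (by omega) (by omega)
          omega
        · have e1 : Γ (a' - 1) = Γ (a - 1) + 1 := hΓc (a' - 1) (by omega) (by omega)
          omega
        · have e1 : Γ (b' + 1) = Γ (a - 1) + 1 := hΓc (b' + 1) (by omega) (by omega)
          rw [he] at hΓb1'
          omega
        · have e1 : Γ (b + 1) = Γ (a' - 1) + 1 := hΓc' (b + 1) (by omega) (by omega)
          rw [he] at e1
          omega
        · exact hne ⟨h'.1, h'.2⟩
    rcases hsep with hsepL | hsepR
    · -- left case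
      have hub : muF Γ x (b' + 1) ≤ Γ (a' - 1) := by
        calc muF Γ x (b' + 1) ≤ Γ (b' + 1) := hμle _
        _ = Γ (a' - 1) := hΓb1'
      -- μ constant on [a'-1, b'+1]
      have hconst : ∀ d k, k + d = b' + 1 → a' - 1 ≤ k → muF Γ x k = muF Γ x (b' + 1) := by
        intro d
        induction d with
        | zero => intro k hk _; rw [show k = b' + 1 by omega]
        | succ n ih =>
          intro k hk hk2
          have h5 : muF Γ x k = min (Γ k) (muF Γ x (k + 1)) := muF_rec_left Γ (by omega)
          have h7 := ih (k + 1) (by omega) (by omega)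
          have h8 : muF Γ x (b' + 1) ≤ Γ k := by
            rcases (by omega : k = a' - 1 ∨ (a' ≤ k ∧ k ≤ b')) with rfl | hk'
            · exact hub
            · rw [hΓc' k hk'.1 hk'.2]; omega
          rw [h5, h7, min_eq_right (by omega)]
      set μ0 := muF Γ x (b' + 1) with hμ0
      refine ⟨ha'1, ha'b', fun c h1 h2 => ?_⟩
      have hμc : muF Γ x c = μ0 := hconst (b' + 1 - c) c (by omega) (by omega)
      have hμa1 : muF Γ x (a' - 1) = μ0 := hconst (b' + 1 - (a' - 1)) (a' - 1) (by omega) le_rfl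
      have e1 : Γ c = Γ (a' - 1) + 1 := hΓc' c h1 h2
      have h3 := hμle (a' - 1)
      refine ⟨?_, ?_⟩
      · simp only [hE]; omega
      · simp only [hE]; rw [hΓb1']; omega
    · -- right case
      have hxa : x ≤ a' - 1 := by omega
      have hub : muF Γ x (a' - 1) ≤ Γ (a' - 1) := hμle _
      have hconst : ∀ d k, k = a' - 1 + d → k ≤ b' + 1 → muF Γ x k = muF Γ x (a' - 1) := by
        intro d
        induction d with
        | zero => intro k hk _; rw [show k = a' - 1 by omega]
        | succ n ih =>
          intro k hk hk2
          have hk3 : k = (a' - 1 + n) + 1 := by omega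
          have h5 : muF Γ x ((a' - 1 + n) + 1) = min (muF Γ x (a' - 1 + n)) (Γ ((a' - 1 + n) + 1)) :=
            muF_rec_right Γ (by omega)
          have h7 := ih (a' - 1 + n) rfl (by omega)
          have h8 : muF Γ x (a' - 1) ≤ Γ k := by
            rcases (by omega : k = b' + 1 ∨ (a' ≤ k ∧ k ≤ b')) with rfl | hk'
            · rw [hΓb1']; exact hub
            · rw [hΓc' k hk'.1 hk'.2]; omega
          rw [hk3, h5, h7, ← hk3, min_eq_left (by omega)]
      set μ0 := muF Γ x (a' - 1) with hμ0
      refine ⟨ha'1, ha'b', fun c h1 h2 => ?_⟩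
      have hμc : muF Γ x c = μ0 := hconst (c - (a' - 1)) c (by omega) (by omega)
      have hμb1 : muF Γ x (b' + 1) = μ0 := hconst (b' + 1 - (a' - 1)) (b' + 1) (by omega) le_rfl
      have e1 : Γ c = Γ (a' - 1) + 1 := hΓc' c h1 h2
      have h3 := hμle (a' - 1)
      refine ⟨?_, ?_⟩
      · simp only [hE]; omega
      · simp only [hE]; rw [hΓb1']; omega
  end Stmt11Aux


theorem stmt11 (Γ : ℕ → ℕ) (hΓ : IsMotzkin Γ) (a b x : ℕ)
    (hab : IsHillInterval Γ a b) (hx1 : a ≤ x) (hx2 : x ≤ b) :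
    {q : ℕ × ℕ | IsHillInterval (pivotExcPath x Γ) q.1 q.2}
      = {q : ℕ × ℕ | IsHillInterval Γ q.1 q.2} \ {(a, b)} := by
  have hs1 : ∀ k, Γ (k + 1) ≤ Γ k + 1 := fun k => by have := hΓ.2.1 k; omega
  have hs2 : ∀ k, Γ k ≤ Γ (k + 1) + 1 := fun k => by have := hΓ.2.1 k; omega
  ext ⟨p, q⟩
  simp only [Set.mem_setOf_eq, Set.mem_diff, Set.mem_singleton_iff, Prod.mk.injEq]
  exact Stmt11Aux.key Γ hs1 hs2 a b x hab hx1 hx2 p q
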